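/- For every finite-dimensional irreducible complex G-representation V with Hom_G(V, L) ≠ 0, the A^G-module Hom_G(V, L) is simple: it has no A^G-invariant subspace other than 0 and itself. (Abstract Frobenius decomposition, Theorem 2.2, part 1.) -/

import Mathlib

/-- Conjugation action of a group element on endomorphisms of `L`:
`g · T := ρ(g) ∘ T ∘ ρ(g)⁻¹`. -/
def conjEnd {G L : Type*} [Group G] [AddCommGroup L] [Module ℂ L]
    (ρ : Representation ℂ G L) (g : G) :
    Module.End ℂ L →ₗ[ℂ] Module.End ℂ L where
  toFun T := ρ g ∘ₗ T ∘ₗ ρ g⁻¹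
  map_add' T S := by ext v; simp
  map_smul' c T := by ext v; simp

/-!
By Dixmier's lemma (`L` has countable dimension and `ℂ` is uncountable), every `A`-linear
endomorphism of the simple `A`-module `L` is a scalar, so Jacobson density lets `A` move
finitely many linearly independent vectors anywhere. Given `0 ≠ T ∈ W`, which is injective
because `V` is irreducible, and any `S ∈ Hom_G(V, L)`, this yields `a ∈ A` with `a ∘ T = S`.
The component `e` of `a` in a `G`-stable complement of `{c ∈ A | c ∘ T = 0}` still satisfies
`e ∘ T = S`, and `g · e - e` lies both in that complement and in the annihilator, so `e ∈ A^G`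
and `S = e ∘ T ∈ W`.
-/

universe u v

open Cardinal

theorem Transcendental.linearIndependent_sub_inv_of_divisionRing
    {k D : Type*} [Field k] [DivisionRing D] [Algebra k D] {x : D} (hx : Transcendental k x) :
    LinearIndependent k fun a ↦ (x - algebraMap k D a)⁻¹ := by
  -- the double centralizer of `x` is a commutative subfield containing `x`
  set F := Subalgebra.centralizer k (Subalgebra.centralizer k {x} : Set D)
  have hxF : x ∈ F := fun y hy ↦ (hy x rfl).symm
  have hFx : ∀ y ∈ F, y ∈ Subalgebra.centralizer k {x} := by
    intro y hy z hz
    rw [Set.mem_singleton_iff.mp hz]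
    exact hy x fun w hw ↦ by rw [Set.mem_singleton_iff.mp hw]
  have hF : IsField F :=
    { exists_pair_ne := ⟨0, 1, zero_ne_one⟩
      mul_comm := fun y z ↦ Subtype.ext (z.2 y (hFx y y.2))
      mul_inv_cancel := fun {y} hy ↦
        ⟨⟨(y : D)⁻¹, fun z hz ↦ Commute.inv_right₀ (y.2 z hz)⟩,
          Subtype.ext (mul_inv_cancel₀ (Subtype.coe_injective.ne hy))⟩ }
  let _ : Field F := hF.toField
  have hxF' : Transcendental k (⟨x, hxF⟩ : F) :=
    mt (isAlgebraic_algHom_iff F.val Subtype.coe_injective).mpr hx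
  have hinv : (fun a ↦ (x - algebraMap k D a)⁻¹) =
      F.val ∘ fun a ↦ (⟨x, hxF⟩ - algebraMap k F a)⁻¹ := by
    funext a
    change _ = F.val _
    rw [map_inv₀]
    simp
  rw [hinv]
  exact hxF'.linearIndependent_sub_inv.map' F.val.toLinearMap
    (LinearMap.ker_eq_bot.mpr Subtype.coe_injective)

theorem IsAlgClosed.algebraMap_bijective_of_rank_lt
    {k : Type u} {D : Type v} [Field k] [IsAlgClosed k] [DivisionRing D] [Algebra k D]
    (h : Cardinal.lift.{u} (Module.rank k D) < Cardinal.lift.{v} #k) :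
    Function.Bijective (algebraMap k D) := by
  have : Algebra.IsAlgebraic k D := ⟨fun x ↦ by
    by_contra hx
    exact h.not_ge
      (Transcendental.linearIndependent_sub_inv_of_divisionRing hx).cardinal_lift_le_rank⟩
  exact IsAlgClosed.algebraMap_bijective_of_isIntegral

theorem Module.End.algebraMap_surjective_of_rank_lt
    {k : Type u} {R : Type*} {L : Type v} [Field k] [IsAlgClosed k] [Ring R] [Algebra k R]
    [AddCommGroup L] [Module R L] [Module k L] [IsScalarTower k R L] [SMulCommClass R k L]
    [IsSimpleModule R L] (h : Cardinal.lift.{u} (Module.rank k L) < Cardinal.lift.{v} #k) :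
    Function.Surjective (algebraMap k (Module.End R L)) := by
  classical
  have := IsSimpleModule.nontrivial R L
  obtain ⟨v, hv⟩ := exists_ne (0 : L)
  let eval : Module.End R L →ₗ[k] L :=
    { toFun := fun f ↦ f v, map_add' := fun _ _ ↦ rfl, map_smul' := fun _ _ ↦ rfl }
  have heval : Function.Injective eval := by
    refine (injective_iff_map_eq_zero eval).mpr fun f hf ↦ ?_
    by_contra hf0
    exact hv ((LinearMap.bijective_of_ne_zero hf0).injective (hf.trans f.map_zero.symm))
  have hrank := lift_le.{u}.mpr (eval.rank_le_of_injective heval)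
  exact (IsAlgClosed.algebraMap_bijective_of_rank_lt (hrank.trans_lt h)).surjective

theorem jacobson_density_of_algebraMap_surjective
    {k R L : Type*} [Field k] [Ring R] [Algebra k R] [AddCommGroup L] [Module R L] [Module k L]
    [IsScalarTower k R L] [SMulCommClass R k L] [IsSemisimpleModule R L]
    (hk : Function.Surjective (algebraMap k (Module.End R L))) (g : L →ₗ[k] L) (s : Finset L) :
    ∃ r : R, ∀ m ∈ s, r • m = g m := by
  let f : Module.End (Module.End R L) L :=
    { toFun := g, map_add' := g.map_add
      map_smul' := fun φ m ↦ by
        obtain ⟨c, rfl⟩ := hk φ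
        simp }
  obtain ⟨r, hr⟩ := jacobson_density f s
  exact ⟨r, fun m hm ↦ (hr m hm).symm⟩

theorem Subalgebra.isSimpleModule_of_forall_invariant
    {k L : Type*} [Field k] [AddCommGroup L] [Module k L] [Nontrivial L]
    (A : Subalgebra k (Module.End k L))
    (hA : ∀ p : Submodule k L, (∀ T ∈ A, ∀ x ∈ p, T x ∈ p) → p = ⊥ ∨ p = ⊤) :
    IsSimpleModule A L where
  eq_bot_or_eq_top p := by
    simpa using hA (p.restrictScalars k) fun T hT x hx ↦ p.smul_mem ⟨T, hT⟩ hx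

theorem Subalgebra.exists_mem_comp_eq_of_ker_eq_bot
    {k L V : Type*} [Field k] [AddCommGroup L] [Module k L] [AddCommGroup V] [Module k V]
    [FiniteDimensional k V] (A : Subalgebra k (Module.End k L)) [IsSemisimpleModule A L]
    (hk : Function.Surjective (algebraMap k (Module.End A L)))
    {T : V →ₗ[k] L} (hT : LinearMap.ker T = ⊥) (S : V →ₗ[k] L) :
    ∃ a ∈ A, a ∘ₗ T = S := by
  classical
  obtain ⟨h, hh⟩ := T.exists_leftInverse_of_injective hT
  let b := Module.finBasis k V
  obtain ⟨a, ha⟩ := jacobson_density_of_algebraMap_surjective hk (S ∘ₗ h)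
    (Finset.univ.image fun i ↦ T (b i))
  refine ⟨a, a.2, b.ext fun i ↦ ?_⟩
  have := ha (T (b i)) (Finset.mem_image_of_mem _ (Finset.mem_univ i))
  simpa [← LinearMap.comp_apply (f := h), hh, Subalgebra.smul_def] using this

theorem Module.rank_le_aleph0_of_span_countable {R M : Type*} [Ring R] [StrongRankCondition R]
    [AddCommGroup M] [Module R M] {s : Set M} (hs : s.Countable)
    (hspan : Submodule.span R s = ⊤) : Module.rank R M ≤ ℵ₀ := by
  rw [← rank_top R M, ← hspan]
  exact (rank_span_le s).trans (mk_le_aleph0_iff.mpr hs.to_subtype)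

section Equivariant

variable {G L V : Type*} [Group G] [AddCommGroup L] [Module ℂ L] [AddCommGroup V] [Module ℂ V]
  {ρ : Representation ℂ G L} {π : Representation ℂ G V}

theorem ker_eq_bot_of_equivariant
    (hπ : ∀ p : Submodule ℂ V, (∀ g : G, ∀ v ∈ p, π g v ∈ p) → p = ⊥ ∨ p = ⊤)
    {T : V →ₗ[ℂ] L} (hT : ∀ g : G, T ∘ₗ π g = ρ g ∘ₗ T) (hT0 : T ≠ 0) :
    LinearMap.ker T = ⊥ := by
  refine (hπ _ fun g v hv ↦ ?_).resolve_right (mt LinearMap.ker_eq_top.mp hT0)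
  rw [LinearMap.mem_ker] at hv ⊢
  rw [← LinearMap.comp_apply, hT, LinearMap.comp_apply, hv, map_zero]

theorem conjEnd_comp_eq {T S : V →ₗ[ℂ] L} (hT : ∀ g : G, T ∘ₗ π g = ρ g ∘ₗ T)
    (hS : ∀ g : G, S ∘ₗ π g = ρ g ∘ₗ S) {c : Module.End ℂ L} (hc : c ∘ₗ T = S) (g : G) :
    conjEnd ρ g c ∘ₗ T = S := by
  ext v
  have hTv : ρ g⁻¹ (T v) = T (π g⁻¹ v) := (LinearMap.congr_fun (hT g⁻¹) v).symm
  have hSv : ρ g (S (π g⁻¹ v)) = S v := by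
    rw [← LinearMap.comp_apply (f := S), hS, LinearMap.comp_apply, ← Module.End.mul_apply,
      ← map_mul, mul_inv_cancel, map_one, Module.End.one_apply]
  simp only [conjEnd, LinearMap.coe_mk, AddHom.coe_mk, LinearMap.comp_apply, hTv,
    ← LinearMap.comp_apply (f := c), hc, hSv]

theorem exists_invariant_mem_comp_eq {A : Subalgebra ℂ (Module.End ℂ L)}
    (hAG : ∀ g : G, ∀ T ∈ A, conjEnd ρ g T ∈ A)
    (hAcompred : ∀ p : Submodule ℂ (Module.End ℂ L),
      p ≤ Subalgebra.toSubmodule A → (∀ g : G, ∀ S ∈ p, conjEnd ρ g S ∈ p) →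
      ∃ q : Submodule ℂ (Module.End ℂ L), q ≤ Subalgebra.toSubmodule A ∧
        (∀ g : G, ∀ S ∈ q, conjEnd ρ g S ∈ q) ∧
        p ⊓ q = ⊥ ∧ p ⊔ q = Subalgebra.toSubmodule A)
    {T S : V →ₗ[ℂ] L} (hT : ∀ g : G, T ∘ₗ π g = ρ g ∘ₗ T) (hS : ∀ g : G, S ∘ₗ π g = ρ g ∘ₗ S)
    {a : Module.End ℂ L} (ha : a ∈ A) (haT : a ∘ₗ T = S) :
    ∃ e ∈ A, (∀ g : G, conjEnd ρ g e = e) ∧ e ∘ₗ T = S := by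
  set K := Subalgebra.toSubmodule A ⊓ LinearMap.ker (LinearMap.lcomp ℂ L T)
  have hK : ∀ c, c ∈ K ↔ c ∈ A ∧ c ∘ₗ T = 0 := fun c ↦ Iff.rfl
  have hKG : ∀ g : G, ∀ c ∈ K, conjEnd ρ g c ∈ K := fun g c hc ↦
    (hK _).mpr ⟨hAG g c ((hK c).mp hc).1,
      conjEnd_comp_eq hT (fun _ ↦ by simp) ((hK c).mp hc).2 g⟩
  obtain ⟨q, hqA, hqG, hKq, hKqA⟩ := hAcompred K inf_le_left hKG
  obtain ⟨c, hc, e, he, rfl⟩ := Submodule.mem_sup.mp (hKqA ▸ ha : a ∈ K ⊔ q)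
  have heT : e ∘ₗ T = S := by
    rw [← haT, LinearMap.add_comp, ((hK c).mp hc).2, zero_add]
  refine ⟨e, hqA he, fun g ↦ ?_, heT⟩
  have hdiff : conjEnd ρ g e - e ∈ K ⊓ q := by
    refine ⟨(hK _).mpr ⟨A.sub_mem (hAG g e (hqA he)) (hqA he), ?_⟩, q.sub_mem (hqG g e he) he⟩
    rw [LinearMap.sub_comp, conjEnd_comp_eq hT hS heT g, heT, sub_self]
  rwa [hKq, Submodule.mem_bot, sub_eq_zero] at hdiff

end Equivariant

theorem multiplicity_space_simple
    {G L : Type*} [Group G] [AddCommGroup L] [Module ℂ L]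
    (ρ : Representation ℂ G L)
    -- `L` has countable dimension
    (hcount : ∃ s : Set L, s.Countable ∧ Submodule.span ℂ s = ⊤)
    (A : Subalgebra ℂ (Module.End ℂ L))
    -- `A` acts irreducibly on `L`
    (hAirr : ∀ p : Submodule ℂ L, (∀ T ∈ A, ∀ x ∈ p, T x ∈ p) → p = ⊥ ∨ p = ⊤)
    -- `A` is invariant under the conjugation `G`-action
    (hAG : ∀ g : G, ∀ T ∈ A, conjEnd ρ g T ∈ A)
    -- the `G`-action on `A` is completely reducible
    (hAcompred : ∀ p : Submodule ℂ (Module.End ℂ L),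
      p ≤ Subalgebra.toSubmodule A → (∀ g : G, ∀ S ∈ p, conjEnd ρ g S ∈ p) →
      ∃ q : Submodule ℂ (Module.End ℂ L), q ≤ Subalgebra.toSubmodule A ∧
        (∀ g : G, ∀ S ∈ q, conjEnd ρ g S ∈ q) ∧
        p ⊓ q = ⊥ ∧ p ⊔ q = Subalgebra.toSubmodule A)
    -- `(π, V)` is a finite-dimensional irreducible `G`-representation
    {V : Type*} [AddCommGroup V] [Module ℂ V] [FiniteDimensional ℂ V]
    (π : Representation ℂ G V)
    (hVirr : ∀ p : Submodule ℂ V, (∀ g : G, ∀ v ∈ p, π g v ∈ p) → p = ⊥ ∨ p = ⊤)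
    -- `W` is an `A^G`-invariant subspace of `Hom_G(V, L)`
    (W : Submodule ℂ (V →ₗ[ℂ] L))
    (hWsub : ∀ T ∈ W, ∀ g : G, T ∘ₗ π g = ρ g ∘ₗ T)
    (hWinv : ∀ D ∈ A, (∀ g : G, conjEnd ρ g D = D) → ∀ T ∈ W, D ∘ₗ T ∈ W) :
    W = ⊥ ∨ ∀ S : V →ₗ[ℂ] L, (∀ g : G, S ∘ₗ π g = ρ g ∘ₗ S) → S ∈ W := by
  refine or_iff_not_imp_left.mpr fun hW S hS ↦ ?_
  obtain ⟨T, hTW, hT0⟩ := (Submodule.ne_bot_iff W).mp hW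
  obtain ⟨v, hv⟩ := DFunLike.ne_iff.mp hT0
  have : Nontrivial L := nontrivial_of_ne _ _ hv
  have : IsSimpleModule A L := A.isSimpleModule_of_forall_invariant hAirr
  have hrank : lift.{0} (Module.rank ℂ L) < lift #ℂ := by
    obtain ⟨s, hs, hspan⟩ := hcount
    rw [mk_complex, lift_continuum]
    exact (lift_le_aleph0.mpr (Module.rank_le_aleph0_of_span_countable hs hspan)).trans_lt
      aleph0_lt_continuum
  obtain ⟨a, ha, haT⟩ := A.exists_mem_comp_eq_of_ker_eq_bot
    (Module.End.algebraMap_surjective_of_rank_lt hrank)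
    (ker_eq_bot_of_equivariant hVirr (hWsub T hTW) hT0) S
  obtain ⟨e, he, heG, heT⟩ := exists_invariant_mem_comp_eq hAG hAcompred (hWsub T hTW) hS ha haT
  exact heT ▸ hWinv e he heG T hTW
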